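/- Generalised initial sequents: for every properly closed nested calculus NQ.L, every context S{·}, every 𝓛-formula A, every signature X, and all multisets Γ, Δ of 𝓛-formulas, the nested sequent S{X; A, Γ ⇒ Δ, A} is NQ.L-derivable. -/

import Mathlib

set_option maxHeartbeats 1000000

namespace NQML

/-! ## The first-order modal language 𝓛 -/

/-- Formulas of the first-order modal language 𝓛:
`A ::= R i (x₁,…,xₙ) | x = y | ⊥ | A ⊃ A | ∀x A | □A`, variables are natural numbers. -/
inductive Fml : Type
  | rel : ℕ → List ℕ → Fml
  | eq  : ℕ → ℕ → Fml
  | bot : Fml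
  | imp : Fml → Fml → Fml
  | all : ℕ → Fml → Fml
  | box : Fml → Fml
  deriving DecidableEq

namespace Fml

/-- Atomic formulas. -/
def Atomic : Fml → Prop
  | rel _ _ => True
  | eq _ _  => True
  | _       => False

/-- Free variables of a formula. -/
def fv : Fml → Finset ℕ
  | rel _ l => l.toFinset
  | eq a b  => {a, b}
  | bot     => ∅
  | imp A B => fv A ∪ fv B
  | all z A => (fv A).erase z
  | box A   => fv A

/-- Capture-avoiding application of a renaming `σ` to the free variables of a formula;
bound variables are renamed when a capture would occur. -/
def substF : (ℕ → ℕ) → Fml → Fml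
  | σ, rel n l => rel n (l.map σ)
  | σ, eq a b  => eq (σ a) (σ b)
  | _, bot     => bot
  | σ, imp A B => imp (substF σ A) (substF σ B)
  | σ, box A   => box (substF σ A)
  | σ, all z A =>
      let captured := ((fv A).erase z).image σ
      let z' := if z ∈ captured then captured.sup id + 1 else z
      all z' (substF (Function.update σ z z') A)

/-- `A.sub y x` is `A(y/x)`: the capture-avoiding substitution of `y` for the free
occurrences of `x` in `A`. -/
def sub (A : Fml) (y x : ℕ) : Fml := substF (fun v => if v = x then y else v) A

/-- Defined connectives. -/
def neg (A : Fml) : Fml := imp A bot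
def top : Fml := imp bot bot
def conj (A B : Fml) : Fml := neg (imp A (neg B))
def disj (A B : Fml) : Fml := imp (neg A) B
def ex (x : ℕ) (A : Fml) : Fml := neg (all x (neg A))

/-- The existence predicate `𝓔 x := ∃ y (y = x)` (with `y` a variable distinct from `x`). -/
def Epred (x : ℕ) : Fml := ex (x + 1) (eq (x + 1) x)

end Fml

/-! ## Nested sequents -/

mutual
  /-- Nested sequents `S ::= X;Γ⇒Δ | S,[S],…,[S]`: a node carries a signature `X`
  (a multiset of variables), an antecedent `Γ` and a succedent `Δ` (multisets of
  formulas), and a list of bracketed nested sequents. -/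
  inductive NSeq : Type
    | node : Multiset ℕ → Multiset Fml → Multiset Fml → NSeqs → NSeq
  /-- Lists of nested sequents. -/
  inductive NSeqs : Type
    | nil  : NSeqs
    | cons : NSeq → NSeqs → NSeqs
end

namespace NSeqs
def append : NSeqs → NSeqs → NSeqs
  | nil, t => t
  | cons s ss, t => cons s (append ss t)
end NSeqs

instance : Append NSeqs := ⟨NSeqs.append⟩

/-- Merging two nested sequents at the root. -/
def NSeq.merge : NSeq → NSeq → NSeq
  | .node X Γ Δ cs, .node Y Φ Ψ ds => .node (X + Y) (Γ + Φ) (Δ + Ψ) (cs ++ ds)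

/-- Free variables of a multiset of formulas. -/
def msFv (Γ : Multiset Fml) : Finset ℕ := (Γ.map Fml.fv).sup

mutual
  /-- Variables occurring (in the signature or free in a formula) in a nested sequent. -/
  def NSeq.fv : NSeq → Finset ℕ
    | .node X Γ Δ cs => X.toFinset ∪ msFv Γ ∪ msFv Δ ∪ NSeqs.fv cs
  def NSeqs.fv : NSeqs → Finset ℕ
    | .nil => ∅
    | .cons s ss => NSeq.fv s ∪ NSeqs.fv ss
end

mutual
  /-- Componentwise application of a renaming to a nested sequent. -/
  def NSeq.subst : NSeq → (ℕ → ℕ) → NSeq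
    | .node X Γ Δ cs, σ =>
        .node (X.map σ) (Γ.map (Fml.substF σ)) (Δ.map (Fml.substF σ)) (NSeqs.subst cs σ)
  def NSeqs.subst : NSeqs → (ℕ → ℕ) → NSeqs
    | .nil, _ => .nil
    | .cons s ss, σ => .cons (NSeq.subst s σ) (NSeqs.subst ss σ)
end

/-! ## Contexts -/

mutual
  /-- Contexts: nested sequents with holes in consequent position.  A node records
  how many holes occur at that node together with the bracketed sub-contexts. -/
  inductive NCtx : Type
    | node : Multiset ℕ → Multiset Fml → Multiset Fml → ℕ → NCtxs → NCtx
  inductive NCtxs : Type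
    | nil  : NCtxs
    | cons : NCtx → NCtxs → NCtxs
end

namespace NCtxs
def append : NCtxs → NCtxs → NCtxs
  | nil, t => t
  | cons c cs, t => cons c (append cs t)
end NCtxs

instance : Append NCtxs := ⟨NCtxs.append⟩

mutual
  /-- The number of holes of a context. -/
  def NCtx.holes : NCtx → ℕ
    | .node _ _ _ k cs => k + NCtxs.holes cs
  def NCtxs.holes : NCtxs → ℕ
    | .nil => 0
    | .cons c cs => NCtx.holes c + NCtxs.holes cs
end

mutual
  /-- The list of depths of the holes of a context (in the order in which they are filled). -/
  def NCtx.holeDepths : NCtx → List ℕ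
    | .node _ _ _ k cs => List.replicate k 0 ++ (NCtxs.holeDepths cs).map (· + 1)
  def NCtxs.holeDepths : NCtxs → List ℕ
    | .nil => []
    | .cons c cs => NCtx.holeDepths c ++ NCtxs.holeDepths cs
end

mutual
  /-- Filling the holes of a context with a list of nested sequents: each nested sequent
  is merged at the node where the corresponding hole occurs. -/
  def NCtx.fill : NCtx → List NSeq → NSeq
    | .node X Γ Δ k cs, L =>
        (L.take k).foldl NSeq.merge (.node X Γ Δ (NCtxs.fill cs (L.drop k)))
  def NCtxs.fill : NCtxs → List NSeq → NSeqs
    | .nil, _ => .nil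
    | .cons c cs, L =>
        .cons (NCtx.fill c (L.take (NCtx.holes c))) (NCtxs.fill cs (L.drop (NCtx.holes c)))
end

/-- Merging two contexts at the root. -/
def NCtx.mergeC : NCtx → NCtx → NCtx
  | .node X Γ Δ k cs, .node Y Φ Ψ j ds => .node (X + Y) (Γ + Φ) (Δ + Ψ) (k + j) (cs ++ ds)

mutual
  /-- Plugging a context into the first hole of a context. -/
  def NCtx.plug : NCtx → NCtx → NCtx
    | .node X Γ Δ k cs, D =>
        if k = 0 then .node X Γ Δ k (NCtxs.plug cs D)
        else NCtx.mergeC (.node X Γ Δ (k - 1) cs) D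
  def NCtxs.plug : NCtxs → NCtx → NCtxs
    | .nil, _ => .nil
    | .cons c cs, D =>
        if NCtx.holes c = 0 then .cons c (NCtxs.plug cs D) else .cons (NCtx.plug c D) cs
end

/-! ## Frames, axioms and proper closure -/

/-- The axioms D, T, B, 4, 5, CBF, BF, UI. -/
inductive Ax : Type
  | D | T | B | four | five | cbf | bf | ui
  deriving DecidableEq

/-- A frame `⟨W, R, D⟩` with worlds `W`, accessibility `Rel` and domains `Dom` over a
universe `U` of objects; some world has a nonempty domain. -/
structure Frame (W U : Type) : Type where
  Rel : W → W → Prop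
  Dom : W → Set U
  nonempty : Nonempty W
  dom_nonempty : ∃ w, (Dom w).Nonempty

/-- The frame/domain condition corresponding to each axiom. -/
def Frame.sat {W U : Type} (F : Frame W U) : Ax → Prop
  | .D    => ∀ w, ∃ v, F.Rel w v
  | .T    => ∀ w, F.Rel w w
  | .B    => ∀ w v, F.Rel w v → F.Rel v w
  | .four => ∀ w v u, F.Rel w v → F.Rel v u → F.Rel w u
  | .five => ∀ w v u, F.Rel w v → F.Rel w u → F.Rel v u
  | .cbf  => ∀ w v, F.Rel w v → F.Dom w ⊆ F.Dom v
  | .bf   => ∀ w v, F.Rel w v → F.Dom v ⊆ F.Dom w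
  | .ui   => ∀ w v, F.Dom w = F.Dom v

/-- A `Q.L`-frame: a frame satisfying the conditions of all axioms in `L`. -/
def FrameFor {W U : Type} (F : Frame W U) (L : Set Ax) : Prop := ∀ a ∈ L, F.sat a

/-- `L` is properly closed: whenever every `Q.L`-frame satisfies the frame condition of an
axiom among 4, 5, CBF, BF, that axiom belongs to `L`. -/
def ProperlyClosed (L : Set Ax) : Prop :=
  ∀ a ∈ ({Ax.four, Ax.five, Ax.cbf, Ax.bf} : Set Ax),
    (∀ (W U : Type) (F : Frame W U), FrameFor F L → F.sat a) → a ∈ L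

/-! ## Models, satisfaction, validity and the formula interpretation -/

/-- A model: a frame together with a valuation interpreting each `n`-ary relation symbol
at each world by tuples of objects from the union of the domains. -/
structure Model (W U : Type) extends Frame W U where
  Val : W → ℕ → List U → Prop
  val_dom : ∀ w i l, Val w i l → ∀ u ∈ l, ∃ v, u ∈ Dom v

/-- Satisfaction of a formula at a world under an assignment (variables are rigid). -/
def Model.sat {W U : Type} (M : Model W U) : (ℕ → U) → W → Fml → Prop
  | σ, w, .rel i l => M.Val w i (l.map σ)
  | σ, _, .eq a b  => σ a = σ b
  | _, _, .bot     => False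
  | σ, w, .imp A B => M.sat σ w A → M.sat σ w B
  | σ, w, .all x A => ∀ u ∈ M.Dom w, M.sat (Function.update σ x u) w A
  | σ, w, .box A   => ∀ v, M.Rel w v → M.sat σ v A

/-- An assignment maps every variable into the union of the domains. -/
def Assign {W U : Type} (M : Model W U) (σ : ℕ → U) : Prop := ∀ x, ∃ w, σ x ∈ M.Dom w

/-- `Q.L`-validity: truth at every world of every model on a `Q.L`-frame under every
assignment. -/
def Valid (L : Set Ax) (A : Fml) : Prop :=
  ∀ (W U : Type) (M : Model W U), FrameFor M.toFrame L →
    ∀ σ, Assign M σ → ∀ w, M.sat σ w A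

/-- Iterated conjunction and disjunction. -/
def listConj : List Fml → Fml
  | [] => Fml.top
  | A :: l => Fml.conj A (listConj l)

def listDisj : List Fml → Fml
  | [] => Fml.bot
  | A :: l => Fml.disj A (listDisj l)

mutual
  /-- The formula interpretation of a nested sequent:
  `fm(X;Γ⇒Δ,[S₁],…,[Sₙ]) = (⋀_{x∈X} 𝓔x ∧ ⋀Γ ⊃ ⋁Δ) ∨ ⋁ₖ □ fm(Sₖ)`. -/
  noncomputable def NSeq.fm : NSeq → Fml
    | .node X Γ Δ cs =>
        Fml.disj
          (Fml.imp (Fml.conj (listConj (X.toList.map Fml.Epred)) (listConj Γ.toList))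
            (listDisj Δ.toList))
          (NSeqs.fmDisj cs)
  noncomputable def NSeqs.fmDisj : NSeqs → Fml
    | .nil => Fml.bot
    | .cons s ss => Fml.disj (Fml.box (NSeq.fm s)) (NSeqs.fmDisj ss)
end

/-! ## The nested calculus NQ.L -/

/-- A single rule application (instance) of the nested calculus `NQ.L`: `Step L ps S`
says that `S` can be inferred from the list of premisses `ps` by one rule of `NQ.L`. -/
inductive Step (L : Set Ax) : List NSeq → NSeq → Prop
  /-- Initial sequents `S{X; P,Γ ⇒ Δ,P}` with `P` atomic. -/
  | init (C : NCtx) (X : Multiset ℕ) (Γ Δ : Multiset Fml) (P : Fml) :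
      C.holes = 1 → P.Atomic →
      Step L [] (C.fill [.node X (P ::ₘ Γ) (P ::ₘ Δ) .nil])
  /-- `L⊥`. -/
  | botL (C : NCtx) (X : Multiset ℕ) (Γ Δ : Multiset Fml) :
      C.holes = 1 →
      Step L [] (C.fill [.node X (Fml.bot ::ₘ Γ) Δ .nil])
  /-- `L⊃`. -/
  | impL (C : NCtx) (X : Multiset ℕ) (Γ Δ : Multiset Fml) (A B : Fml) :
      C.holes = 1 →
      Step L [C.fill [.node X Γ (A ::ₘ Δ) .nil], C.fill [.node X (B ::ₘ Γ) Δ .nil]]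
        (C.fill [.node X (Fml.imp A B ::ₘ Γ) Δ .nil])
  /-- `R⊃`. -/
  | impR (C : NCtx) (X : Multiset ℕ) (Γ Δ : Multiset Fml) (A B : Fml) :
      C.holes = 1 →
      Step L [C.fill [.node X (A ::ₘ Γ) (B ::ₘ Δ) .nil]]
        (C.fill [.node X Γ (Fml.imp A B ::ₘ Δ) .nil])
  /-- `L∀`. -/
  | allL (C : NCtx) (X : Multiset ℕ) (Γ Δ : Multiset Fml) (x z : ℕ) (A : Fml) :
      C.holes = 1 →
      Step L [C.fill [.node (z ::ₘ X) (A.sub z x ::ₘ Fml.all x A ::ₘ Γ) Δ .nil]]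
        (C.fill [.node (z ::ₘ X) (Fml.all x A ::ₘ Γ) Δ .nil])
  /-- `R∀` with `y` fresh. -/
  | allR (C : NCtx) (X : Multiset ℕ) (Γ Δ : Multiset Fml) (x y : ℕ) (A : Fml) :
      C.holes = 1 → y ∉ NSeq.fv (C.fill [.node X Γ (Fml.all x A ::ₘ Δ) .nil]) →
      Step L [C.fill [.node (y ::ₘ X) Γ (A.sub y x ::ₘ Δ) .nil]]
        (C.fill [.node X Γ (Fml.all x A ::ₘ Δ) .nil])
  /-- `L□`. -/
  | boxL (C : NCtx) (X Y : Multiset ℕ) (Γ Δ Φ Ψ : Multiset Fml) (ts : NSeqs) (A : Fml) :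
      C.holes = 1 →
      Step L [C.fill [.node X (Fml.box A ::ₘ Γ) Δ (.cons (.node Y (A ::ₘ Φ) Ψ ts) .nil)]]
        (C.fill [.node X (Fml.box A ::ₘ Γ) Δ (.cons (.node Y Φ Ψ ts) .nil)])
  /-- `R□`. -/
  | boxR (C : NCtx) (X : Multiset ℕ) (Γ Δ : Multiset Fml) (A : Fml) :
      C.holes = 1 →
      Step L [C.fill [.node X Γ Δ (.cons (.node 0 0 {A} .nil) .nil)]]
        (C.fill [.node X Γ (Fml.box A ::ₘ Δ) .nil])
  /-- `Ref`. -/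
  | ref (C : NCtx) (X : Multiset ℕ) (Γ Δ : Multiset Fml) (x : ℕ) :
      C.holes = 1 →
      Step L [C.fill [.node X (Fml.eq x x ::ₘ Γ) Δ .nil]] (C.fill [.node X Γ Δ .nil])
  /-- `Repl` (with `P` atomic). -/
  | repl (C : NCtx) (X : Multiset ℕ) (Γ Δ : Multiset Fml) (x y z : ℕ) (P : Fml) :
      C.holes = 1 → P.Atomic →
      Step L [C.fill [.node X (P.sub y z ::ₘ Fml.eq x y ::ₘ P.sub x z ::ₘ Γ) Δ .nil]]
        (C.fill [.node X (Fml.eq x y ::ₘ P.sub x z ::ₘ Γ) Δ .nil])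
  /-- `Repl_X`. -/
  | replX (C : NCtx) (X : Multiset ℕ) (Γ Δ : Multiset Fml) (x y : ℕ) :
      C.holes = 1 →
      Step L [C.fill [.node (x ::ₘ y ::ₘ X) (Fml.eq x y ::ₘ Γ) Δ .nil]]
        (C.fill [.node (x ::ₘ X) (Fml.eq x y ::ₘ Γ) Δ .nil])
  /-- `Rig`. -/
  | rig (C : NCtx) (X Y : Multiset ℕ) (Γ Δ Φ Ψ : Multiset Fml) (x y : ℕ) :
      C.holes = 2 →
      Step L [C.fill [.node X (Fml.eq x y ::ₘ Γ) Δ .nil, .node Y (Fml.eq x y ::ₘ Φ) Ψ .nil]]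
        (C.fill [.node X (Fml.eq x y ::ₘ Γ) Δ .nil, .node Y Φ Ψ .nil])
  /-- `R_D`. -/
  | rD (C : NCtx) (X : Multiset ℕ) (Γ Δ : Multiset Fml) :
      Ax.D ∈ L → C.holes = 1 →
      Step L [C.fill [.node X Γ Δ (.cons (.node 0 0 0 .nil) .nil)]]
        (C.fill [.node X Γ Δ .nil])
  /-- `R_T`. -/
  | rT (C : NCtx) (X : Multiset ℕ) (Γ Δ : Multiset Fml) (A : Fml) :
      Ax.T ∈ L → C.holes = 1 →
      Step L [C.fill [.node X (A ::ₘ Fml.box A ::ₘ Γ) Δ .nil]]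
        (C.fill [.node X (Fml.box A ::ₘ Γ) Δ .nil])
  /-- `R_B`. -/
  | rB (C : NCtx) (X Y : Multiset ℕ) (Γ Δ Φ Ψ : Multiset Fml) (ts : NSeqs) (A : Fml) :
      Ax.B ∈ L → C.holes = 1 →
      Step L [C.fill [.node X (A ::ₘ Γ) Δ (.cons (.node Y (Fml.box A ::ₘ Φ) Ψ ts) .nil)]]
        (C.fill [.node X Γ Δ (.cons (.node Y (Fml.box A ::ₘ Φ) Ψ ts) .nil)])
  /-- `R_4`. -/
  | r4 (C : NCtx) (X Y : Multiset ℕ) (Γ Δ Φ Ψ : Multiset Fml) (ts : NSeqs) (A : Fml) :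
      Ax.four ∈ L → C.holes = 1 →
      Step L [C.fill [.node X (Fml.box A ::ₘ Γ) Δ (.cons (.node Y (Fml.box A ::ₘ Φ) Ψ ts) .nil)]]
        (C.fill [.node X (Fml.box A ::ₘ Γ) Δ (.cons (.node Y Φ Ψ ts) .nil)])
  /-- `R_5`, with the side condition that the second hole has depth ≥ 1. -/
  | r5 (C : NCtx) (X Y : Multiset ℕ) (Γ Δ Φ Ψ : Multiset Fml) (A : Fml) :
      Ax.five ∈ L → (∃ d₁ d₂, C.holeDepths = [d₁, d₂] ∧ 1 ≤ d₂) →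
      Step L [C.fill [.node X (Fml.box A ::ₘ Γ) Δ .nil, .node Y (Fml.box A ::ₘ Φ) Ψ .nil]]
        (C.fill [.node X (Fml.box A ::ₘ Γ) Δ .nil, .node Y Φ Ψ .nil])
  /-- `R_cbf`. -/
  | rcbf (C : NCtx) (X Y : Multiset ℕ) (Γ Δ Φ Ψ : Multiset Fml) (ts : NSeqs) (x : ℕ) :
      Ax.cbf ∈ L → C.holes = 1 →
      Step L [C.fill [.node (x ::ₘ X) Γ Δ (.cons (.node (x ::ₘ Y) Φ Ψ ts) .nil)]]
        (C.fill [.node (x ::ₘ X) Γ Δ (.cons (.node Y Φ Ψ ts) .nil)])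
  /-- `R_bf`. -/
  | rbf (C : NCtx) (X Y : Multiset ℕ) (Γ Δ Φ Ψ : Multiset Fml) (ts : NSeqs) (x : ℕ) :
      Ax.bf ∈ L → C.holes = 1 →
      Step L [C.fill [.node (x ::ₘ X) Γ Δ (.cons (.node (x ::ₘ Y) Φ Ψ ts) .nil)]]
        (C.fill [.node X Γ Δ (.cons (.node (x ::ₘ Y) Φ Ψ ts) .nil)])
  /-- `R_ui`. -/
  | rui (C : NCtx) (X : Multiset ℕ) (Γ Δ : Multiset Fml) (x : ℕ) :
      Ax.ui ∈ L → C.holes = 1 →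
      Step L [C.fill [.node (x ::ₘ X) Γ Δ .nil]] (C.fill [.node X Γ Δ .nil])
  /-- `R_5dom`, present iff `5 ∈ L` and `{CBF, BF} ∩ L ≠ ∅`; both holes have depth ≥ 1. -/
  | r5dom (C : NCtx) (X Y : Multiset ℕ) (Γ Δ Φ Ψ : Multiset Fml) (x : ℕ) :
      Ax.five ∈ L → (Ax.cbf ∈ L ∨ Ax.bf ∈ L) →
      (∃ d₁ d₂, C.holeDepths = [d₁, d₂] ∧ 1 ≤ d₁ ∧ 1 ≤ d₂) →
      Step L [C.fill [.node (x ::ₘ X) Γ Δ .nil, .node (x ::ₘ Y) Φ Ψ .nil]]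
        (C.fill [.node (x ::ₘ X) Γ Δ .nil, .node Y Φ Ψ .nil])

/-- `Deriv L n S`: the nested sequent `S` is derivable in `NQ.L` with a derivation of
height at most `n`. -/
inductive Deriv (L : Set Ax) : ℕ → NSeq → Prop
  | step {n : ℕ} {ps : List NSeq} {S : NSeq} :
      Step L ps S → (∀ p ∈ ps, Deriv L n p) → Deriv L (n + 1) S

/-- `S` is `NQ.L`-derivable. -/
def Derivable (L : Set Ax) (S : NSeq) : Prop := ∃ n, Deriv L n S

end NQML

/-!
Induction on the size of `A`, which capture-avoiding renaming preserves. Atoms are initial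
sequents and `⊥` is `L⊥`. For `A ⊃ B`, `∀x A` and `□A` apply the right rule and then the left
rule for the same connective; the premisses are generalised initial sequents for the immediate
subformulas (for `∀`, with `A(y/x)` for a fresh `y`). In the `□` case the premiss
`S{X; □A,Γ ⇒ Δ, [∅; A ⇒ A]}` lives in the context `S{X; □A,Γ ⇒ Δ, [·]}`, whose hole sits one
bracket deeper, so the statement has to be proved for all single-hole contexts at once.
-/

namespace NQML

def Fml.size : Fml → ℕ
  | .rel _ _ => 1
  | .eq _ _ => 1
  | .bot => 1
  | .imp A B => A.size + B.size + 1
  | .all _ A => A.size + 1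
  | .box A => A.size + 1

@[simp]
lemma Fml.size_substF (σ : ℕ → ℕ) (A : Fml) : (A.substF σ).size = A.size := by
  induction A generalizing σ <;> simp [Fml.substF, Fml.size, *]

@[simp]
lemma Fml.size_sub (A : Fml) (y x : ℕ) : (A.sub y x).size = A.size :=
  Fml.size_substF _ _

lemma NSeqs.append_def (s t : NSeqs) : s ++ t = NSeqs.append s t := rfl

lemma NCtxs.append_def (s t : NCtxs) : s ++ t = NCtxs.append s t := rfl

@[simp]
lemma NSeqs.nil_append (s : NSeqs) : NSeqs.nil ++ s = s := rfl

@[simp]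
lemma NSeq.empty_merge (s : NSeq) : NSeq.merge (.node 0 0 0 .nil) s = s := by
  obtain ⟨Y, Φ, Ψ, ts⟩ := s
  simp [NSeq.merge]

lemma NCtxs.holes_append (cs ds : NCtxs) : (cs ++ ds).holes = cs.holes + ds.holes := by
  match cs with
  | .nil => simp [NCtxs.append_def, NCtxs.append, NCtxs.holes]
  | .cons c cs =>
    have ih := NCtxs.holes_append cs ds
    simp only [NCtxs.append_def, NCtxs.append, NCtxs.holes] at ih ⊢
    omega

lemma NCtxs.fill_append (cs ds : NCtxs) (L : List NSeq) :
    (cs ++ ds).fill L = cs.fill (L.take cs.holes) ++ ds.fill (L.drop cs.holes) := by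
  match cs with
  | .nil => simp [NCtxs.append_def, NCtxs.append, NCtxs.fill, NCtxs.holes]
  | .cons c cs =>
    have ih := NCtxs.fill_append cs ds
    simp only [NCtxs.append_def, NCtxs.append, NCtxs.fill, NCtxs.holes, NSeqs.append_def,
      NSeqs.append] at ih ⊢
    rw [ih, List.take_take, List.drop_take, List.drop_drop, Nat.min_def, if_pos (by omega),
      Nat.add_sub_cancel_left, Nat.add_comm]

mutual

lemma NCtx.exists_fill_bracket (C : NCtx) (hC : C.holes = 1) (X : Multiset ℕ)
    (Γ Δ : Multiset Fml) :
    ∃ C' : NCtx, C'.holes = 1 ∧ ∀ s, C'.fill [s] = C.fill [.node X Γ Δ (.cons s .nil)] := by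
  obtain ⟨X₀, Γ₀, Δ₀, k, cs⟩ := C
  simp only [NCtx.holes] at hC
  obtain ⟨rfl, hcs⟩ | ⟨rfl, hcs⟩ : k = 0 ∧ cs.holes = 1 ∨ k = 1 ∧ cs.holes = 0 := by omega
  · obtain ⟨cs', hcs', hfill⟩ := cs.exists_fill_bracket hcs X Γ Δ
    exact ⟨.node X₀ Γ₀ Δ₀ 0 cs', by simp [NCtx.holes, hcs'], fun s => by simp [NCtx.fill, hfill]⟩
  · refine ⟨.node (X₀ + X) (Γ₀ + Γ) (Δ₀ + Δ) 0 (cs ++ .cons (.node 0 0 0 1 .nil) .nil),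
      by simp [NCtx.holes, NCtxs.holes_append, hcs, NCtxs.holes], fun s => ?_⟩
    simp [NCtx.fill, NCtxs.fill_append, hcs, NCtxs.fill, NCtx.holes, NCtxs.holes, NSeq.merge.eq_1]

lemma NCtxs.exists_fill_bracket (cs : NCtxs) (hcs : cs.holes = 1) (X : Multiset ℕ)
    (Γ Δ : Multiset Fml) :
    ∃ cs' : NCtxs, cs'.holes = 1 ∧
      ∀ s, cs'.fill [s] = cs.fill [.node X Γ Δ (.cons s .nil)] := by
  obtain _ | ⟨c, cs⟩ := cs
  · simp [NCtxs.holes] at hcs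
  simp only [NCtxs.holes] at hcs
  obtain ⟨hc, hcs⟩ | ⟨hc, hcs⟩ : c.holes = 0 ∧ cs.holes = 1 ∨ c.holes = 1 ∧ cs.holes = 0 := by
    omega
  · obtain ⟨cs', hcs', hfill⟩ := cs.exists_fill_bracket hcs X Γ Δ
    exact ⟨.cons c cs', by simp [NCtxs.holes, hc, hcs'], fun s => by simp [NCtxs.fill, hc, hfill]⟩
  · obtain ⟨c', hc', hfill⟩ := c.exists_fill_bracket hc X Γ Δ
    exact ⟨.cons c' cs, by simp [NCtxs.holes, hc', hcs],
      fun s => by simp [NCtxs.fill, hc, hc', hfill]⟩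

end

lemma Deriv.mono {L : Set Ax} {n m : ℕ} {S : NSeq} (h : Deriv L n S) (hnm : n ≤ m) :
    Deriv L m S := by
  induction h generalizing m with
  | step hstep _ ih =>
    obtain ⟨k, rfl⟩ : ∃ k, m = k + 1 := ⟨m - 1, by omega⟩
    exact Deriv.step hstep fun p hp => ih p hp (by omega)

lemma exists_deriv_of_forall_derivable {L : Set Ax} {ps : List NSeq}
    (h : ∀ p ∈ ps, Derivable L p) : ∃ n, ∀ p ∈ ps, Deriv L n p := by
  induction ps with
  | nil => exact ⟨0, by simp⟩
  | cons p ps ih =>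
    simp only [List.mem_cons, forall_eq_or_imp] at h ⊢
    obtain ⟨⟨n, hn⟩, hps⟩ := h
    obtain ⟨m, hm⟩ := ih hps
    exact ⟨max n m, hn.mono (le_max_left _ _), fun q hq => (hm q hq).mono (le_max_right _ _)⟩

lemma Derivable.of_step {L : Set Ax} {ps : List NSeq} {S : NSeq} (hS : Step L ps S)
    (hps : ∀ p ∈ ps, Derivable L p) : Derivable L S :=
  let ⟨n, hn⟩ := exists_deriv_of_forall_derivable hps
  ⟨n + 1, Deriv.step hS hn⟩

/-- **Generalised initial sequents** (Lemma 1): for every properly closed nested calculus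
`NQ.L`, every context `S{·}`, every 𝓛-formula `A`, every signature `X` and all multisets
`Γ, Δ` of 𝓛-formulas, the nested sequent `S{X; A,Γ ⇒ Δ,A}` is `NQ.L`-derivable. -/
theorem generalised_initial_sequents (L : Set Ax) (hL : ProperlyClosed L)
    (C : NCtx) (hC : C.holes = 1) (A : Fml) (X : Multiset ℕ) (Γ Δ : Multiset Fml) :
    Derivable L (C.fill [.node X (A ::ₘ Γ) (A ::ₘ Δ) .nil]) := by
  match A with
  | .rel i l => exact .of_step (Step.init C X Γ Δ _ hC trivial) (by simp)
  | .eq a b => exact .of_step (Step.init C X Γ Δ _ hC trivial) (by simp)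
  | .bot => exact .of_step (Step.botL C X Γ (Fml.bot ::ₘ Δ) hC) (by simp)
  | .imp A B =>
    refine .of_step (Step.impR C X (Fml.imp A B ::ₘ Γ) Δ A B hC) ?_
    rw [List.forall_mem_singleton, Multiset.cons_swap]
    refine .of_step (Step.impL C X (A ::ₘ Γ) (B ::ₘ Δ) A B hC) ?_
    simp only [List.mem_cons, List.not_mem_nil, or_false, forall_eq_or_imp, forall_eq]
    exact ⟨generalised_initial_sequents L hL C hC A X Γ (B ::ₘ Δ),
      generalised_initial_sequents L hL C hC B X (A ::ₘ Γ) Δ⟩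
  | .all x A =>
    obtain ⟨y, hy⟩ := Infinite.exists_notMem_finset
      (C.fill [.node X (Fml.all x A ::ₘ Γ) (Fml.all x A ::ₘ Δ) .nil]).fv
    refine .of_step (Step.allR C X (Fml.all x A ::ₘ Γ) Δ x y A hC hy) ?_
    rw [List.forall_mem_singleton]
    refine .of_step (Step.allL C X Γ (A.sub y x ::ₘ Δ) x y A hC) ?_
    rw [List.forall_mem_singleton]
    exact generalised_initial_sequents L hL C hC (A.sub y x) (y ::ₘ X) (Fml.all x A ::ₘ Γ) Δ
  | .box A =>
    refine .of_step (Step.boxR C X (Fml.box A ::ₘ Γ) Δ A hC) ?_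
    rw [List.forall_mem_singleton]
    refine .of_step (Step.boxL C X 0 Γ Δ 0 {A} NSeqs.nil A hC) ?_
    rw [List.forall_mem_singleton]
    obtain ⟨C', hC', hfill⟩ := C.exists_fill_bracket hC X (Fml.box A ::ₘ Γ) Δ
    rw [← hfill]
    exact generalised_initial_sequents L hL C' hC' A 0 0 0
termination_by A.size
decreasing_by all_goals simp [Fml.size]; try omega

end NQML
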